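/- For a unit vector ψ₁₂ ∈ ℂ^d ⊗ ℂ^d, Tr((W_{λ,d}⊗W_{λ,d}(|ψ₁₂⟩⟨ψ₁₂|))²) = (((d-2)λ²+1)/(d-1))² + S_λ²|⟨ψ₁₂|ψ̄₁₂⟩|² − 2(S_λ + R_λ²)(S_λ + (d-2)Q_λ²)(1 − Tr(ρ₁²)) − S_λ·((d-2)λ²+1)/(d-1)·Tr(ρ₁ρ₁^T + ρ₂ρ₂^T), where Q_λ = (1-λ)/(d-1), R_λ = λ − Q_λ, S_λ = 2λQ_λ. -/

import Mathlib

open Matrix Finset Kronecker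

noncomputable section

/-- Outer product |ψ⟩⟨ψ|. -/
def outer {n : Type*} [Fintype n] (ψ : n → ℂ) : Matrix n n ℂ :=
  fun i j => ψ i * star (ψ j)

/-- Outer product |φ⟩⟨χ|. -/
def outerLR {n : Type*} [Fintype n] (φ χ : n → ℂ) : Matrix n n ℂ :=
  fun i j => φ i * star (χ j)

/-- Inner product ⟨φ|χ⟩ (conjugate-linear in the first argument). -/
def cinner {n : Type*} [Fintype n] (φ χ : n → ℂ) : ℂ := ∑ i, star (φ i) * χ i

/-- Entrywise complex conjugate of a vector. -/
def conjVec {n : Type*} (ψ : n → ℂ) : n → ℂ := fun i => star (ψ i)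

/-- Depolarized Werner–Holevo channel W_{λ,d}(ρ) = λρ + (1-λ)(Tr(ρ)·1 - ρᵀ)/(d-1). -/
def WH (d : ℕ) (lam : ℝ) (ρ : Matrix (Fin d) (Fin d) ℂ) : Matrix (Fin d) (Fin d) ℂ :=
  (lam : ℂ) • ρ +
    (((1 - lam : ℝ) : ℂ) * ((d : ℂ) - 1)⁻¹) •
      (ρ.trace • (1 : Matrix (Fin d) (Fin d) ℂ) - ρ.transpose)

/-- Tensor product Φ₁ ⊗ Φ₂ of two linear maps on d×d matrices, acting on d²×d² matrices. -/
def tensorMap {d : ℕ}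
    (Φ₁ Φ₂ : Matrix (Fin d) (Fin d) ℂ → Matrix (Fin d) (Fin d) ℂ)
    (M : Matrix (Fin d × Fin d) (Fin d × Fin d) ℂ) :
    Matrix (Fin d × Fin d) (Fin d × Fin d) ℂ :=
  fun p q => ∑ i, ∑ j, ∑ k, ∑ l,
    M (i, k) (j, l) * (Φ₁ (Matrix.single i j 1)) p.1 q.1 *
      (Φ₂ (Matrix.single k l 1)) p.2 q.2

/-- Partial trace over the first tensor factor. -/
def ptr1 {d : ℕ} (M : Matrix (Fin d × Fin d) (Fin d × Fin d) ℂ) : Matrix (Fin d) (Fin d) ℂ :=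
  fun i j => ∑ k, M (k, i) (k, j)

/-- Partial trace over the second tensor factor. -/
def ptr2 {d : ℕ} (M : Matrix (Fin d × Fin d) (Fin d × Fin d) ℂ) : Matrix (Fin d) (Fin d) ℂ :=
  fun i j => ∑ k, M (i, k) (j, k)

/-- Partial transpose on the first tensor factor. -/
def pt1 {d : ℕ} (M : Matrix (Fin d × Fin d) (Fin d × Fin d) ℂ) :
    Matrix (Fin d × Fin d) (Fin d × Fin d) ℂ :=
  fun p q => M (q.1, p.2) (p.1, q.2)

/-- Partial transpose on the second tensor factor. -/
def pt2 {d : ℕ} (M : Matrix (Fin d × Fin d) (Fin d × Fin d) ℂ) :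
    Matrix (Fin d × Fin d) (Fin d × Fin d) ℂ :=
  fun p q => M (p.1, q.2) (q.1, p.2)

/-!
`W_{λ,d}` belongs to the algebra of maps `X ↦ a X + b Tr(X) 1 + c Xᵀ`, each of which is symmetric
for the pairing `(X, Y) ↦ Tr(X Y)`. Hence so is `W ⊗ W`, and for `N = (W ⊗ W)(ρ)` we get
`Tr(N²) = Tr(ρ (W² ⊗ W²)(ρ))` with `W²` again in the algebra. Writing
`W² ⊗ W² = (W² ⊗ id) ∘ (id ⊗ W²)` and using the symmetry once more leaves the nine pairings of
`ρ, 1 ⊗ ρ₂, ρ^{T₁}` with `ρ, ρ₁ ⊗ 1, ρ^{T₂}`. For a pure state these are `1`, `Tr ρ₁² = Tr ρ₂²`,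
`Tr ρ₁ρ₁ᵀ`, `Tr ρ₂ρ₂ᵀ` and `|⟨ψ|ψ̄⟩|²`.
-/

variable {d : ℕ}

local notation "𝕄" => Matrix (Fin d) (Fin d) ℂ
local notation "𝕄₂" => Matrix (Fin d × Fin d) (Fin d × Fin d) ℂ

lemma single_eq_smul_single_one {m n α : Type*} [DecidableEq m] [DecidableEq n]
    [MulZeroOneClass α] (i : m) (j : n) (x : α) :
    single i j x = x • single i j (1 : α) := by
  rw [Matrix.smul_single, smul_eq_mul, mul_one]

section TensorMap

lemma tensorMap_add (F G : 𝕄 → 𝕄) (M N : 𝕄₂) :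
    tensorMap F G (M + N) = tensorMap F G M + tensorMap F G N := by
  ext p q
  simp only [tensorMap, Matrix.add_apply, add_mul, Finset.sum_add_distrib]

lemma tensorMap_smul (F G : 𝕄 → 𝕄) (c : ℂ) (M : 𝕄₂) :
    tensorMap F G (c • M) = c • tensorMap F G M := by
  ext p q
  simp only [tensorMap, Matrix.smul_apply, smul_eq_mul, Finset.mul_sum, mul_assoc]

lemma tensorMap_zero (F G : 𝕄 → 𝕄) : tensorMap F G 0 = 0 := by
  simpa using tensorMap_smul F G 0 0

lemma single_prod_eq_smul_kronecker (p q : Fin d × Fin d) (x : ℂ) :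
    (single p q x : 𝕄₂) = x • (single p.1 q.1 1 ⊗ₖ single p.2 q.2 1) := by
  rw [single_kronecker_single, one_mul, single_eq_smul_single_one]

lemma tensorMap_single (F G : 𝕄 → 𝕄) (p q : Fin d × Fin d) (x : ℂ) :
    tensorMap F G (single p q x) = x • (F (single p.1 q.1 1) ⊗ₖ G (single p.2 q.2 1)) := by
  obtain ⟨i, k⟩ := p
  obtain ⟨j, l⟩ := q
  ext
  simp [tensorMap, Matrix.single_apply, ite_and, mul_assoc]

lemma tensorMap_kronecker (F G : 𝕄 →ₗ[ℂ] 𝕄) (X Y : 𝕄) :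
    tensorMap F G (X ⊗ₖ Y) = F X ⊗ₖ G Y := by
  induction X using Matrix.induction_on' with
  | h_zero => rw [zero_kronecker, tensorMap_zero, map_zero, zero_kronecker]
  | h_add X X' hX hX' => rw [add_kronecker, tensorMap_add, hX, hX', map_add, add_kronecker]
  | h_std_basis i j x =>
    induction Y using Matrix.induction_on' with
    | h_zero => rw [kronecker_zero, tensorMap_zero, map_zero, kronecker_zero]
    | h_add Y Y' hY hY' => rw [kronecker_add, tensorMap_add, hY, hY', map_add, kronecker_add]
    | h_std_basis k l y =>
      rw [single_kronecker_single, tensorMap_single, single_eq_smul_single_one i j x,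
        single_eq_smul_single_one k l y, map_smul, map_smul, smul_kronecker, kronecker_smul,
        smul_smul]

lemma tensorMap_tensorMap (F G F' G' : 𝕄 →ₗ[ℂ] 𝕄) (M : 𝕄₂) :
    tensorMap F G (tensorMap F' G' M) = tensorMap (F ∘ₗ F') (G ∘ₗ G') M := by
  induction M using Matrix.induction_on' with
  | h_zero => rw [tensorMap_zero, tensorMap_zero, tensorMap_zero]
  | h_add M N hM hN => rw [tensorMap_add, tensorMap_add, hM, hN, tensorMap_add]
  | h_std_basis p q x =>
    rw [tensorMap_single, tensorMap_single, tensorMap_smul, tensorMap_kronecker]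
    rfl

lemma trace_mul_tensorMap_comm (F G : 𝕄 → 𝕄)
    (hF : ∀ A B, (A * F B).trace = (F A * B).trace)
    (hG : ∀ A B, (A * G B).trace = (G A * B).trace) (X Y : 𝕄₂) :
    (X * tensorMap F G Y).trace = (tensorMap F G X * Y).trace := by
  induction X using Matrix.induction_on' with
  | h_zero => simp [tensorMap_zero]
  | h_add X X' hX hX' => rw [add_mul, trace_add, hX, hX', tensorMap_add, add_mul, trace_add]
  | h_std_basis p q x =>
    induction Y using Matrix.induction_on' with
    | h_zero => simp [tensorMap_zero]
    | h_add Y Y' hY hY' => rw [tensorMap_add, mul_add, trace_add, hY, hY', mul_add, trace_add]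
    | h_std_basis p' q' y =>
      rw [tensorMap_single, tensorMap_single, single_prod_eq_smul_kronecker,
        single_prod_eq_smul_kronecker]
      simp only [smul_mul_smul_comm, trace_smul, ← mul_kronecker_mul, trace_kronecker, hF, hG]

end TensorMap

section OrthCovMap

variable {R n : Type*} [CommRing R] [Fintype n] [DecidableEq n]

/-- These span the linear maps commuting with `X ↦ O X Oᵀ` for all orthogonal `O`. -/
def orthCovMap (a b c : R) : Matrix n n R →ₗ[R] Matrix n n R where
  toFun X := a • X + (b * X.trace) • 1 + c • Xᵀ
  map_add' X Y := by
    simp only [trace_add, transpose_add, mul_add, add_smul, smul_add]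
    abel
  map_smul' r X := by
    simp only [trace_smul, transpose_smul, smul_add, smul_smul, smul_eq_mul, RingHom.id_apply]
    ring_nf

@[simp]
lemma orthCovMap_apply (a b c : R) (X : Matrix n n R) :
    orthCovMap a b c X = a • X + (b * X.trace) • 1 + c • Xᵀ := rfl

lemma orthCovMap_comp (a b c a' b' c' : R) :
    orthCovMap a b c ∘ₗ (orthCovMap a' b' c' : Matrix n n R →ₗ[R] Matrix n n R) =
      orthCovMap (a * a' + c * c') (a * b' + b * (a' + Fintype.card n * b' + c') + c * b')
        (a * c' + c * a') := by
  ext X : 1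
  simp only [LinearMap.comp_apply, orthCovMap_apply, trace_add, trace_smul, trace_one,
    trace_transpose, transpose_add, transpose_smul, transpose_one, transpose_transpose,
    smul_eq_mul]
  module

lemma trace_mul_orthCovMap_comm (a b c : R) (A B : Matrix n n R) :
    (A * orthCovMap a b c B).trace = (orthCovMap a b c A * B).trace := by
  have hT : (A * Bᵀ).trace = (Aᵀ * B).trace := by
    rw [← trace_transpose, transpose_mul, transpose_transpose, trace_mul_comm]
  simp only [orthCovMap_apply, mul_add, add_mul, mul_smul_comm, smul_mul_assoc, trace_add,
    trace_smul, Matrix.mul_one, Matrix.one_mul, hT, smul_eq_mul]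
  ring

end OrthCovMap

section Hermitian

variable {n : Type*} [Fintype n] {A : Matrix n n ℂ}

lemma Matrix.IsHermitian.coe_re_trace_mul_self (hA : A.IsHermitian) :
    (((A * A).trace.re : ℝ) : ℂ) = (A * A).trace :=
  Complex.conj_eq_iff_re.mp <| show star _ = _ by
    rw [← trace_conjTranspose, conjTranspose_mul, hA.eq]

lemma Matrix.IsHermitian.coe_re_trace_mul_transpose (hA : A.IsHermitian) :
    (((A * Aᵀ).trace.re : ℝ) : ℂ) = (A * Aᵀ).trace :=
  Complex.conj_eq_iff_re.mp <| show star _ = _ by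
    rw [← trace_conjTranspose, conjTranspose_mul,
      conjTranspose_transpose_eq_transpose_conjTranspose, hA.eq, trace_mul_comm]

end Hermitian

section PartialTrace

lemma tensorMap_orthCovMap_id (a b c : ℂ) (M : 𝕄₂) :
    tensorMap (orthCovMap a b c) (LinearMap.id (R := ℂ)) M =
      a • M + b • (1 ⊗ₖ ptr1 M) + c • pt1 M := by
  ext ⟨i, k⟩ ⟨j, l⟩
  simp [tensorMap, ptr1, pt1, Matrix.single_apply, trace, one_apply, ite_and,
    Finset.sum_add_distrib, mul_add, add_mul, Finset.mul_sum, mul_ite, ite_mul, mul_comm,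
    Matrix.ite_apply]

lemma tensorMap_id_orthCovMap (a b c : ℂ) (M : 𝕄₂) :
    tensorMap (LinearMap.id (R := ℂ)) (orthCovMap a b c) M =
      a • M + b • (ptr2 M ⊗ₖ 1) + c • pt2 M := by
  ext ⟨i, k⟩ ⟨j, l⟩
  simp [tensorMap, ptr2, pt2, Matrix.single_apply, trace, one_apply, ite_and,
    Finset.sum_add_distrib, mul_add, add_mul, Finset.mul_sum, mul_ite, ite_mul, mul_comm,
    Matrix.ite_apply]

lemma trace_ptr1 (M : 𝕄₂) : (ptr1 M).trace = M.trace := by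
  simp only [trace, Matrix.diag, ptr1, Fintype.sum_prod_type]
  exact Finset.sum_comm

lemma trace_ptr2 (M : 𝕄₂) : (ptr2 M).trace = M.trace := by
  simp only [trace, Matrix.diag, ptr2, Fintype.sum_prod_type]

lemma ptr1_pt2 (M : 𝕄₂) : ptr1 (pt2 M) = (ptr1 M)ᵀ := rfl

lemma ptr2_pt1 (M : 𝕄₂) : ptr2 (pt1 M) = (ptr2 M)ᵀ := rfl

lemma trace_mul_kronecker_one (M : 𝕄₂) (B : 𝕄) :
    (M * (B ⊗ₖ 1)).trace = (ptr2 M * B).trace := by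
  simp only [trace, Matrix.diag, mul_apply, ptr2, Fintype.sum_prod_type, kroneckerMap_apply,
    one_apply, mul_ite, mul_one, mul_zero, Finset.sum_ite_eq', Finset.mem_univ, if_true,
    Finset.sum_mul]
  exact Finset.sum_congr rfl fun _ _ => Finset.sum_comm

lemma trace_one_kronecker_mul (M : 𝕄₂) (A : 𝕄) :
    ((1 ⊗ₖ A) * M).trace = (A * ptr1 M).trace := by
  simp only [trace, Matrix.diag, mul_apply, ptr1, Fintype.sum_prod_type, kroneckerMap_apply,
    one_apply, ite_mul, one_mul, zero_mul, Finset.sum_ite_irrel, Finset.sum_const_zero,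
    Finset.sum_ite_eq, Finset.mem_univ, if_true, Finset.mul_sum]
  rw [Finset.sum_comm]
  exact Finset.sum_congr rfl fun _ _ => Finset.sum_comm

lemma trace_one_kronecker_mul_kronecker_one (A B : 𝕄) :
    ((1 ⊗ₖ A) * (B ⊗ₖ 1)).trace = A.trace * B.trace := by
  rw [← mul_kronecker_mul, trace_kronecker, Matrix.one_mul, Matrix.mul_one, mul_comm]

end PartialTrace

section RankOne

variable (ψ : Fin d × Fin d → ℂ)

lemma outer_mul_outer : outer ψ * outer ψ = cinner ψ ψ • outer ψ := by
  ext p q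
  simp only [mul_apply, outer, cinner, Matrix.smul_apply, smul_eq_mul, Finset.sum_mul]
  exact Finset.sum_congr rfl fun _ _ => by ring

lemma trace_outer : (outer ψ).trace = cinner ψ ψ := by
  simp only [trace, Matrix.diag, outer, cinner]
  exact Finset.sum_congr rfl fun _ _ => by ring

lemma ptr2_outer : ptr2 (outer ψ) = of (Function.curry ψ) * (of (Function.curry ψ))ᴴ := by
  ext i j
  simp [ptr2, outer, mul_apply]

lemma ptr1_outer :
    ptr1 (outer ψ) = (of (Function.curry ψ))ᵀ * (of (Function.curry ψ))ᵀᴴ := by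
  ext i j
  simp [ptr1, outer, mul_apply]

lemma isHermitian_ptr1_outer : (ptr1 (outer ψ)).IsHermitian := by
  rw [ptr1_outer]
  exact isHermitian_mul_conjTranspose_self _

lemma isHermitian_ptr2_outer : (ptr2 (outer ψ)).IsHermitian := by
  rw [ptr2_outer]
  exact isHermitian_mul_conjTranspose_self _

lemma trace_ptr1_outer_mul_self :
    (ptr1 (outer ψ) * ptr1 (outer ψ)).trace = (ptr2 (outer ψ) * ptr2 (outer ψ)).trace := by
  rw [ptr1_outer, ptr2_outer, conjTranspose_transpose_eq_transpose_conjTranspose,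
    ← transpose_mul, trace_transpose_mul, Matrix.mul_assoc, trace_mul_comm]
  simp only [Matrix.mul_assoc]

lemma trace_outer_mul_pt2 :
    (outer ψ * pt2 (outer ψ)).trace = (ptr1 (outer ψ) * (ptr1 (outer ψ))ᵀ).trace := by
  simp only [trace, Matrix.diag, mul_apply, transpose_apply, outer, pt2, ptr1,
    Fintype.sum_prod_type, Finset.sum_mul, Finset.mul_sum]
  rw [Finset.sum_comm]
  conv_lhs => enter [2, b, 2, a]; rw [Finset.sum_comm]
  conv_lhs => enter [2, b]; rw [Finset.sum_comm]
  ac_rfl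

lemma trace_pt1_mul_outer :
    (pt1 (outer ψ) * outer ψ).trace = (ptr2 (outer ψ) * (ptr2 (outer ψ))ᵀ).trace := by
  simp only [trace, Matrix.diag, mul_apply, transpose_apply, outer, pt1, ptr2,
    Fintype.sum_prod_type, Finset.sum_mul, Finset.mul_sum]
  conv_lhs => enter [2, a]; rw [Finset.sum_comm]
  rw [Finset.sum_comm]
  ac_rfl

lemma trace_pt1_mul_pt2 :
    (pt1 (outer ψ) * pt2 (outer ψ)).trace = (‖cinner ψ (conjVec ψ)‖ : ℂ) ^ 2 := by
  rw [← Complex.conj_mul']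
  change _ = star _ * _
  simp only [trace, Matrix.diag, mul_apply, outer, pt1, pt2, cinner, conjVec, star_sum,
    star_mul', star_star, Fintype.sum_prod_type, Finset.sum_mul_sum]
  conv_lhs => enter [2, a]; rw [Finset.sum_comm]
  rw [Finset.sum_comm]
  ac_rfl

lemma trace_outer_mul_tensorMap_orthCovMap (hψ : cinner ψ ψ = 1) (a b c a' b' c' : ℂ) :
    (outer ψ * tensorMap (orthCovMap a b c) (orthCovMap a' b' c') (outer ψ)).trace =
      a * a' + b * b' + (a * b' + b * a') * (ptr2 (outer ψ) * ptr2 (outer ψ)).trace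
        + (a + b) * c' * (ptr1 (outer ψ) * (ptr1 (outer ψ))ᵀ).trace
        + c * (a' + b') * (ptr2 (outer ψ) * (ptr2 (outer ψ))ᵀ).trace
        + c * c' * (‖cinner ψ (conjVec ψ)‖ : ℂ) ^ 2 := by
  have hsplit : tensorMap (orthCovMap a b c) (orthCovMap a' b' c') (outer ψ) =
      tensorMap (orthCovMap a b c) (LinearMap.id (R := ℂ))
        (tensorMap (LinearMap.id (R := ℂ)) (orthCovMap a' b' c') (outer ψ)) := by
    rw [tensorMap_tensorMap, LinearMap.comp_id, LinearMap.id_comp]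
  rw [hsplit, trace_mul_tensorMap_comm (orthCovMap a b c) LinearMap.id
      (trace_mul_orthCovMap_comm a b c) (fun _ _ => rfl),
    tensorMap_orthCovMap_id, tensorMap_id_orthCovMap]
  simp only [add_mul, mul_add, smul_mul_assoc, mul_smul_comm, trace_add, trace_smul, smul_eq_mul,
    trace_one_kronecker_mul_kronecker_one]
  simp only [outer_mul_outer, trace_mul_kronecker_one, trace_one_kronecker_mul, ptr1_pt2,
    ptr2_pt1, trace_outer_mul_pt2, trace_pt1_mul_outer, trace_pt1_mul_pt2, trace_ptr1,
    trace_ptr2, trace_outer, trace_ptr1_outer_mul_self, trace_mul_comm (ptr2 (outer ψ))ᵀ, hψ,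
    one_smul]
  ring

end RankOne

theorem WH_tensor_output_two_norm_general (d : ℕ) (hd : 2 ≤ d) (lam : ℝ)
    (ψ : Fin d × Fin d → ℂ) (hψ : cinner ψ ψ = 1) :
    (tensorMap (WH d lam) (WH d lam) (outer ψ) *
        tensorMap (WH d lam) (WH d lam) (outer ψ)).trace =
      (((((d : ℝ) - 2) * lam ^ 2 + 1) / ((d : ℝ) - 1)) ^ 2
        + (2 * lam * ((1 - lam) / ((d : ℝ) - 1))) ^ 2 * ‖cinner ψ (conjVec ψ)‖ ^ 2
        - 2 * (2 * lam * ((1 - lam) / ((d : ℝ) - 1))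
                + (lam - (1 - lam) / ((d : ℝ) - 1)) ^ 2) *
              (2 * lam * ((1 - lam) / ((d : ℝ) - 1))
                + ((d : ℝ) - 2) * ((1 - lam) / ((d : ℝ) - 1)) ^ 2) *
              (1 - (ptr2 (outer ψ) * ptr2 (outer ψ)).trace.re)
        - (2 * lam * ((1 - lam) / ((d : ℝ) - 1))) *
              ((((d : ℝ) - 2) * lam ^ 2 + 1) / ((d : ℝ) - 1)) *
              ((ptr2 (outer ψ) * (ptr2 (outer ψ))ᵀ).trace.re
                + (ptr1 (outer ψ) * (ptr1 (outer ψ))ᵀ).trace.re) : ℝ) := by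
  have hWH : WH d lam = orthCovMap (lam : ℂ) ((1 - lam) / (d - 1)) (-((1 - lam) / (d - 1))) := by
    funext X
    simp only [WH, orthCovMap_apply]
    push_cast
    module
  have hd1 : (d : ℂ) - 1 ≠ 0 := sub_ne_zero.mpr (by exact_mod_cast (by omega : d ≠ 1))
  rw [hWH, ← trace_mul_tensorMap_comm _ _ (trace_mul_orthCovMap_comm _ _ _)
      (trace_mul_orthCovMap_comm _ _ _), tensorMap_tensorMap, orthCovMap_comp,
    trace_outer_mul_tensorMap_orthCovMap ψ hψ, Fintype.card_fin]
  push_cast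
  rw [(isHermitian_ptr2_outer ψ).coe_re_trace_mul_self,
    (isHermitian_ptr2_outer ψ).coe_re_trace_mul_transpose,
    (isHermitian_ptr1_outer ψ).coe_re_trace_mul_transpose]
  field_simp
  ring

theorem WH_tensor_output_two_norm (d : ℕ) (hd : 2 ≤ d) (lam : ℝ)
    (hlam : lam ∈ Set.Icc (0 : ℝ) 1) (ψ : Fin d × Fin d → ℂ) (hψ : cinner ψ ψ = 1) :
    (tensorMap (WH d lam) (WH d lam) (outer ψ) *
        tensorMap (WH d lam) (WH d lam) (outer ψ)).trace =
      (((((d : ℝ) - 2) * lam ^ 2 + 1) / ((d : ℝ) - 1)) ^ 2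
        + (2 * lam * ((1 - lam) / ((d : ℝ) - 1))) ^ 2 * ‖cinner ψ (conjVec ψ)‖ ^ 2
        - 2 * (2 * lam * ((1 - lam) / ((d : ℝ) - 1))
                + (lam - (1 - lam) / ((d : ℝ) - 1)) ^ 2) *
              (2 * lam * ((1 - lam) / ((d : ℝ) - 1))
                + ((d : ℝ) - 2) * ((1 - lam) / ((d : ℝ) - 1)) ^ 2) *
              (1 - (ptr2 (outer ψ) * ptr2 (outer ψ)).trace.re)
        - (2 * lam * ((1 - lam) / ((d : ℝ) - 1))) *
              ((((d : ℝ) - 2) * lam ^ 2 + 1) / ((d : ℝ) - 1)) *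
              ((ptr2 (outer ψ) * (ptr2 (outer ψ))ᵀ).trace.re
                + (ptr1 (outer ψ) * (ptr1 (outer ψ))ᵀ).trace.re) : ℝ) :=
  WH_tensor_output_two_norm_general d hd lam ψ hψ
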